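/- arXiv:1703.04346 — 8 statements merged into one kernel-verified Lean document; each statement's English description precedes it below -/
import Mathlib

section
/- Let q be a prime power and let C be an [n,k] linear code over F_{q²} with generator matrix G (a k×n matrix over F_{q²} of rank k whose rows span C). Then C is a Hermitian LCD code if and only if the k×k matrix G·(conj G)ᵀ is nonsingular, where conj G is obtained from G by raising every entry to the q-th power. -/
open Matrix

/-- The Hermitian dual of a linear code `C ⊆ F^ι` over `F = F_{q²}`, where the
conjugate of `x` is `x ^ q`: all words `b` with `∑ i, b i * (c i)^q = 0` for
every codeword `c ∈ C`. -/
def hdualCode {F : Type*} [Field F] (q : ℕ) {ι : Type*} [Fintype ι]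
    (C : Submodule F (ι → F)) : Submodule F (ι → F) where
  carrier := {b | ∀ c ∈ C, b ⬝ᵥ (fun i => (c i) ^ q) = 0}
  add_mem' := by
    intro a b ha hb c hc
    simp [add_dotProduct, ha c hc, hb c hc]
  zero_mem' := by
    intro c hc
    simp
  smul_mem' := by
    intro r a ha c hc
    simp [smul_dotProduct, ha c hc]

/-!
Every codeword is `v ᵥ* G` for a unique `v`, since the rows of `G` are independent. As `|F|` is a
power of the characteristic, `x ↦ x ^ q` is a ring endomorphism of `F`, so a word lies in the
Hermitian dual as soon as it is orthogonal to the conjugated rows; for `v ᵥ* G` this means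
`v ᵥ* (G * (conj G)ᵀ) = 0`. Hence nonzero words of `C ∩ C^⊥H` are exactly the nonzero vectors
of the left kernel of the Gram matrix.
-/

theorem exists_ringHom_eq_pow_of_dvd_card {F : Type*} [Field F] [Fintype F] {q : ℕ}
    (hq : q ∣ Fintype.card F) : ∃ σ : F →+* F, ∀ x, σ x = x ^ q := by
  obtain ⟨d, hp, hcard⟩ := FiniteField.card F (ringChar F)
  obtain ⟨m, -, rfl⟩ := (Nat.dvd_prime_pow hp).1 (hcard ▸ hq)
  have : Fact (ringChar F).Prime := ⟨hp⟩
  exact ⟨iterateFrobenius F (ringChar F) m, iterateFrobenius_def (ringChar F) m⟩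

theorem Matrix.mem_span_range_iff_exists_vecMul {R ι κ : Type*} [Semiring R] [Fintype κ]
    {G : Matrix κ ι R} {x : ι → R} :
    x ∈ Submodule.span R (Set.range G) ↔ ∃ v, v ᵥ* G = x := by
  simp_rw [vecMul_eq_sum]
  exact Submodule.mem_span_range_iff_exists_fun R

section

variable {F : Type*} [Field F] {q : ℕ} {σ : F →+* F} {ι κ : Type*} [Fintype ι]

theorem mem_hdualCode_span_iff (hσ : ∀ x, σ x = x ^ q) {s : Set (ι → F)} {b : ι → F} :
    b ∈ hdualCode q (Submodule.span F s) ↔ ∀ c ∈ s, b ⬝ᵥ (fun i => c i ^ q) = 0 := by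
  refine ⟨fun hb c hc => hb c (Submodule.subset_span hc), fun hs c hc => ?_⟩
  simp_rw [← hσ] at hs ⊢
  induction hc using Submodule.span_induction with
  | mem c hc => exact hs c hc
  | zero => simp
  | add c c' _ _ hc hc' =>
    simp only [Pi.add_apply, map_add]
    rw [← Pi.add_def, dotProduct_add, hc, hc', add_zero]
  | smul r c _ hc =>
    simp only [Pi.smul_apply, smul_eq_mul, map_mul]
    exact (dotProduct_smul (σ r) b fun i => σ (c i)).trans (by rw [hc, smul_zero])

theorem mem_hdualCode_span_range_iff (hσ : ∀ x, σ x = x ^ q) (G : Matrix κ ι F) (b : ι → F) :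
    b ∈ hdualCode q (Submodule.span F (Set.range G)) ↔ G.map (· ^ q) *ᵥ b = 0 := by
  rw [mem_hdualCode_span_iff hσ, funext_iff]
  exact Set.forall_mem_range.trans (forall_congr' fun j => by rw [dotProduct_comm]; rfl)

theorem inf_hdualCode_eq_bot_iff_det_ne_zero [Fintype κ] [DecidableEq κ]
    (hσ : ∀ x, σ x = x ^ q) {G : Matrix κ ι F} (hG : LinearIndependent F G) :
    Submodule.span F (Set.range G) ⊓ hdualCode q (Submodule.span F (Set.range G)) = ⊥ ↔
      (G * (G.map (· ^ q))ᵀ).det ≠ 0 := by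
  have hinj : Function.Injective G.vecMul := vecMul_injective_iff.2 hG
  have hdual (v : κ → F) : v ᵥ* G ∈ hdualCode q (Submodule.span F (Set.range G)) ↔
      v ᵥ* (G * (G.map (· ^ q))ᵀ) = 0 := by
    rw [mem_hdualCode_span_range_iff hσ, ← vecMul_vecMul, vecMul_transpose]
  rw [Ne, ← exists_vecMul_eq_zero_iff, Submodule.eq_bot_iff]
  simp only [Submodule.mem_inf, and_imp, mem_span_range_iff_exists_vecMul, forall_exists_index,
    forall_apply_eq_imp_iff, hdual, hinj.eq_iff' (zero_vecMul G), not_exists, not_and', ne_eq,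
    not_not]

end

theorem hermitian_lcd_iff_gram_nonsingular_general
    (q : ℕ)
    {F : Type*} [Field F] [Fintype F] (hcard : Fintype.card F = q ^ 2)
    {n k : ℕ} (C : Submodule F (Fin n → F))
    (G : Matrix (Fin k) (Fin n) F)
    (hindep : LinearIndependent F G)
    (hspan : Submodule.span F (Set.range G) = C) :
    C ⊓ hdualCode q C = ⊥ ↔ (G * (G.map (· ^ q))ᵀ).det ≠ 0 := by
  obtain ⟨σ, hσ⟩ := exists_ringHom_eq_pow_of_dvd_card (hcard ▸ dvd_pow_self q two_ne_zero)
  exact hspan ▸ inf_hdualCode_eq_bot_iff_det_ne_zero hσ hindep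

/-- A linear code over the finite field `F_{q²}` (`q` a prime power) with a
generator matrix `G` (rows linearly independent and spanning `C`) is Hermitian
LCD iff `G * (conj G)ᵀ` is nonsingular, where `conj G` raises every entry of
`G` to the `q`-th power. -/
theorem hermitian_lcd_iff_gram_nonsingular
    (q : ℕ) (hq : ∃ p m : ℕ, p.Prime ∧ 0 < m ∧ q = p ^ m)
    {F : Type*} [Field F] [Fintype F] (hcard : Fintype.card F = q ^ 2)
    {n k : ℕ} (C : Submodule F (Fin n → F)) (hdim : Module.finrank F C = k)
    (G : Matrix (Fin k) (Fin n) F)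
    (hindep : LinearIndependent F G)
    (hspan : Submodule.span F (Set.range G) = C) :
    C ⊓ hdualCode q C = ⊥ ↔ (G * (G.map (· ^ q))ᵀ).det ≠ 0 :=
  hermitian_lcd_iff_gram_nonsingular_general q hcard C G hindep hspan
end

section
/- Let q be a prime power and let C be an [n,k,d] linear code over F_q with generator matrix G = [I_k : P] in standard form. Let M = G·Gᵀ. Let t ≤ k−1 be a non-negative integer such that det(M_I) = 0 for every subset I of {1,…,k} with 0 ≤ |I| ≤ t, and suppose there exists J ⊆ {1,…,k} of size t+1 with det(M_J) ≠ 0. Then t ≥ h_E(C) − 1, where h_E(C) is the dimension of the Euclidean hull of C. -/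
open Matrix

/-- The Euclidean dual of a linear code. -/
def dualCode {F : Type*} [Field F] {ι : Type*} [Fintype ι]
    (C : Submodule F (ι → F)) : Submodule F (ι → F) where
  carrier := {b | ∀ c ∈ C, b ⬝ᵥ c = 0}
  add_mem' := by
    intro a b ha hb c hc
    simp [add_dotProduct, ha c hc, hb c hc]
  zero_mem' := by
    intro c hc
    simp
  smul_mem' := by
    intro r a ha c hc
    simp [smul_dotProduct, ha c hc]

/-- The minimum (Hamming) distance of a linear code. -/
noncomputable def minDist {F : Type*} [Field F] [DecidableEq F] {ι : Type*} [Fintype ι]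
    (C : Submodule F (ι → F)) : ℕ :=
  sInf {w | ∃ c ∈ C, c ≠ 0 ∧ hammingNorm c = w}

/-- The square submatrix of `M` obtained by deleting the rows and columns
indexed by `I`. -/
def deleteRC {F : Type*} [Field F] {l : ℕ} (M : Matrix (Fin l) (Fin l) F)
    (I : Finset (Fin l)) : Matrix {i : Fin l // i ∉ I} {i : Fin l // i ∉ I} F :=
  Matrix.of fun i j => M i.1 j.1

/-! The hull of the row space of `G` is the image, under `x ↦ x G`, of the kernel of `M = G Gᵀ`;
as the rows of `G` are independent this gives `h_E(C) = dim ker M = k - rank M`. A nonzero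
principal minor of size `k - (t + 1)` forces `rank M ≥ k - (t + 1)`, whence `h_E(C) ≤ t + 1`. -/

section

variable {K : Type*} [Field K] {m ι : Type*} [Fintype m]

theorem vecMul_injective_of_submatrix_eq_one [DecidableEq m] {G : Matrix m ι K} (σ : m → ι)
    (hG : G.submatrix id σ = 1) : Function.Injective G.vecMul := by
  intro x y hxy
  have hσ (z : m → K) : (z ᵥ* G) ∘ σ = z :=
    calc (z ᵥ* G) ∘ σ = z ᵥ* G.submatrix id σ := by ext j; simp [vecMul, dotProduct]
      _ = z := by rw [hG, vecMul_one]
  simpa [hσ] using congrArg (· ∘ σ) hxy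

variable [Fintype ι]

theorem mem_dualCode_span_range_iff (G : Matrix m ι K) (c : ι → K) :
    c ∈ dualCode (Submodule.span K (Set.range G)) ↔ G *ᵥ c = 0 := by
  constructor
  · intro hc
    ext i
    simpa [mulVec, dotProduct_comm] using hc (G i) (Submodule.subset_span ⟨i, rfl⟩)
  · intro hc b hb
    obtain ⟨x, rfl⟩ : b ∈ LinearMap.range G.vecMulLinear := by rwa [range_vecMulLinear]
    rw [vecMulLinear_apply, dotProduct_comm, ← dotProduct_mulVec, hc, dotProduct_zero]

theorem span_range_inf_dualCode_eq_map_ker (G : Matrix m ι K) :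
    Submodule.span K (Set.range G) ⊓ dualCode (Submodule.span K (Set.range G)) =
      (LinearMap.ker (G * Gᵀ).mulVecLin).map G.vecMulLinear := by
  have hrange : LinearMap.range G.vecMulLinear = Submodule.span K (Set.range G) :=
    range_vecMulLinear G
  have hM (x : m → K) : (G * Gᵀ) *ᵥ x = G *ᵥ (x ᵥ* G) := by
    rw [← mulVec_mulVec, mulVec_transpose]
  ext c
  rw [Submodule.mem_inf, mem_dualCode_span_range_iff, ← hrange]
  simp only [Submodule.mem_map, LinearMap.mem_ker, mulVecLin_apply, LinearMap.mem_range,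
    vecMulLinear_apply, hM]
  constructor
  · rintro ⟨⟨x, rfl⟩, hx⟩
    exact ⟨x, hx, rfl⟩
  · rintro ⟨x, hx, rfl⟩
    exact ⟨⟨x, rfl⟩, hx⟩

theorem finrank_span_range_inf_dualCode {G : Matrix m ι K}
    (hG : Function.Injective G.vecMul) :
    Module.finrank K
        ↥(Submodule.span K (Set.range G) ⊓ dualCode (Submodule.span K (Set.range G))) =
      Module.finrank K (LinearMap.ker (G * Gᵀ).mulVecLin) := by
  rw [span_range_inf_dualCode_eq_map_ker]
  exact (Submodule.equivMapOfInjective G.vecMulLinear hG _).finrank_eq.symm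

end

theorem finrank_ker_mulVecLin_le_card_of_det_deleteRC_ne_zero {K : Type*} [Field K] {l : ℕ}
    {A : Matrix (Fin l) (Fin l) K} {J : Finset (Fin l)} (hJ : (deleteRC A J).det ≠ 0) :
    Module.finrank K (LinearMap.ker A.mulVecLin) ≤ J.card := by
  have hrank : l - J.card ≤ A.rank :=
    calc l - J.card = (deleteRC A J).rank := by
          rw [rank_of_det_ne_zero hJ, Fintype.card_subtype_compl, Fintype.card_fin,
            Fintype.card_coe]
      _ ≤ A.rank := rank_submatrix_le A Subtype.val Subtype.val
  have := LinearMap.finrank_range_add_finrank_ker A.mulVecLin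
  rw [Module.finrank_fin_fun] at this
  unfold Matrix.rank at hrank
  omega

theorem hull_dim_le_of_principal_minor_nonzero_general
    {F : Type*} [Field F]
    {n k : ℕ} (hkn : k ≤ n)
    (C : Submodule F (Fin n → F))
    (G : Matrix (Fin k) (Fin n) F)
    (hstd : ∀ i j : Fin k, G i (Fin.castLE hkn j) = if i = j then 1 else 0)
    (hspan : Submodule.span F (Set.range G) = C)
    (t : ℕ)
    (J : Finset (Fin k)) (hJcard : J.card = t + 1)
    (hJ : (deleteRC (G * Gᵀ) J).det ≠ 0) :
    Module.finrank F ↥(C ⊓ dualCode C) ≤ t + 1 := by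
  have hG : Function.Injective G.vecMul :=
    vecMul_injective_of_submatrix_eq_one (Fin.castLE hkn) (by ext i j; simp [hstd, one_apply])
  subst hspan
  rw [finrank_span_range_inf_dualCode hG, ← hJcard]
  exact finrank_ker_mulVecLin_le_card_of_det_deleteRC_ne_zero hJ

/-- Let `C` be an `[n,k,d]` linear code over `F_q` with generator matrix
`G = [I_k : P]` in standard form and `M = G * Gᵀ`.  Suppose `det (M_I) = 0` for
every `I` with `|I| ≤ t ≤ k - 1`, and `det (M_J) ≠ 0` for some `J` of size
`t + 1`.  Then `t ≥ h_E(C) - 1`, i.e. `h_E(C) ≤ t + 1`, where `h_E(C)` is the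
dimension of the Euclidean hull `C ⊓ C^⊥`. -/
theorem hull_dim_le_of_principal_minor_nonzero
    (q : ℕ) (hq : ∃ p m : ℕ, p.Prime ∧ 0 < m ∧ q = p ^ m)
    {F : Type*} [Field F] [Fintype F] [DecidableEq F] (hcard : Fintype.card F = q)
    {n k d : ℕ} (hkn : k ≤ n)
    (C : Submodule F (Fin n → F))
    (hdim : Module.finrank F C = k) (hd : minDist C = d)
    (G : Matrix (Fin k) (Fin n) F)
    (hstd : ∀ i j : Fin k, G i (Fin.castLE hkn j) = if i = j then 1 else 0)
    (hspan : Submodule.span F (Set.range G) = C)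
    (t : ℕ) (ht : t + 1 ≤ k)
    (h0 : ∀ I : Finset (Fin k), I.card ≤ t → (deleteRC (G * Gᵀ) I).det = 0)
    (J : Finset (Fin k)) (hJcard : J.card = t + 1)
    (hJ : (deleteRC (G * Gᵀ) J).det ≠ 0) :
    Module.finrank F ↥(C ⊓ dualCode C) ≤ t + 1 :=
  hull_dim_le_of_principal_minor_nonzero_general hkn C G hstd hspan t J hJcard hJ
end

section
/- Let q be a prime power with q > 3 and let C be an [n,k,d] linear code over F_q. Then there exists a = (a_1,…,a_n) ∈ F_q^n with a_j ≠ 0 for every 1 ≤ j ≤ n such that the code C_a is an Euclidean LCD code (hence C is equivalent to an Euclidean LCD code). -/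
/-!
If the rows of `G` span `C`, then `C_a` is spanned by the rows of `G · diag(a)`, and it is LCD as
soon as its Gram matrix `G · diag(a²) · Gᵀ` is invertible. By the matrix determinant lemma,
`b ↦ det (G · diag(b) · Gᵀ)` is affine in each coordinate `b_j`; it is nonzero at the indicator of
an information set of `C`. A function affine in each coordinate that is nonzero somewhere is
nonzero somewhere on `Tⁿ` for any `T` with two elements, by moving one coordinate at a time into
`T`. Take `T` to be the nonzero squares: there are at least `(q - 1) / 2 ≥ 2` of them when `q > 3`.
-/

open Matrix

/-- The linear map `(c_1, …, c_n) ↦ (a_1 c_1, …, a_n c_n)`; its image of a code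
`C` is the code `C_a`. -/
def scaleMap {F : Type*} [Field F] {n : ℕ} (a : Fin n → F) :
    (Fin n → F) →ₗ[F] (Fin n → F) :=
  LinearMap.pi fun i => a i • LinearMap.proj i

namespace Matrix

variable {m ι R : Type*}

theorem add_vecMulVec_single [DecidableEq m] [Semiring R] (A : Matrix m m R) (i : m) (c : R)
    (v : m → R) : A + vecMulVec (Pi.single i c) v = A.updateRow i (A i + c • v) := by
  ext i' j
  by_cases h : i' = i
  · subst h; simp [vecMulVec_apply]
  · simp [vecMulVec_apply, h]

theorem mul_diagonal_indicator_mul_transpose [Fintype m] [Fintype ι] [DecidableEq ι]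
    [CommSemiring R] (G : Matrix m ι R) {s : m → ι} (hs : Function.Injective s) :
    G * diagonal ((Set.range s).indicator (1 : ι → R)) * Gᵀ =
      G.submatrix id s * (G.submatrix id s)ᵀ := by
  classical
  ext i i'
  have hrange : Finset.univ.filter (· ∈ Set.range s) = Finset.univ.image s := by ext; simp
  rw [mul_apply, mul_apply]
  simp only [mul_diagonal, transpose_apply, submatrix_apply, id_eq]
  rw [← Finset.sum_image (f := fun l => G i l * G i' l) (fun _ _ _ _ h => hs h), ← hrange,
    Finset.sum_filter]
  refine Finset.sum_congr rfl fun l _ => ?_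
  by_cases hl : l ∈ Set.range s <;> simp [hl]

variable [Fintype m] [DecidableEq m] [CommRing R]

theorem det_add_vecMulVec_eq_add_sum (A : Matrix m m R) (u v : m → R) :
    (A + vecMulVec u v).det = A.det + ∑ i, u i * (A.updateRow i v).det := by
  suffices ∀ (S : Finset m) (A : Matrix m m R),
      (A + vecMulVec (∑ i ∈ S, Pi.single i (u i)) v).det =
        A.det + ∑ i ∈ S, u i * (A.updateRow i v).det by
    simpa [Finset.univ_sum_single u] using this Finset.univ A
  intro S
  induction S using Finset.induction_on with
  | empty => simp
  | insert a S ha ih =>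
    intro A
    set A' := A.updateRow a (A a + u a • v)
    have hA' : A'.det = A.det + u a * (A.updateRow a v).det := by
      rw [det_updateRow_add, updateRow_eq_self, det_updateRow_smul]
    -- for `i ≠ a`, the row `v` in position `i` cancels the added multiple of `v` in row `a`
    have hrow : ∀ i ∈ S, (A'.updateRow i v).det = (A.updateRow i v).det := by
      intro i hi
      have hia : i ≠ a := by rintro rfl; exact ha hi
      set B := A.updateRow i v
      have hBa : B a = A a := updateRow_ne hia.symm
      have hBi : B i = v := updateRow_self
      rw [show A'.updateRow i v = B.updateRow a (B a + u a • B i) by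
          rw [hBa, hBi]; exact updateRow_comm _ hia.symm _ _,
        det_updateRow_add, det_updateRow_smul, updateRow_eq_self, det_updateRow_eq_zero hia,
        mul_zero, add_zero]
    rw [Finset.sum_insert ha, add_vecMulVec, ← add_assoc, add_vecMulVec_single, ih, hA',
      Finset.sum_insert ha, Finset.sum_congr rfl fun i hi => by rw [hrow i hi]]
    ring

theorem det_add_vecMulVec (A : Matrix m m R) (u v : m → R) :
    (A + vecMulVec u v).det = A.det + v ⬝ᵥ A.adjugate *ᵥ u := by
  rw [det_add_vecMulVec_eq_add_sum, dotProduct_mulVec, dotProduct_comm, ← mulVec_transpose,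
    adjugate_transpose, ← cramer_eq_adjugate_mulVec]
  simp [dotProduct, cramer_transpose_apply]

end Matrix

open Matrix

section Multiaffine

variable {ι R : Type*} [CommRing R]

def IsMultiaffine [DecidableEq ι] (Φ : (ι → R) → R) : Prop :=
  ∀ (j : ι) (b : ι → R), ∃ α β : R, ∀ t, Φ (Function.update b j t) = α + t * β

theorem exists_mem_add_mul_ne_zero [NoZeroDivisors R] {T : Finset R} (hT : 1 < T.card)
    {α β t₀ : R} (h : α + t₀ * β ≠ 0) : ∃ t ∈ T, α + t * β ≠ 0 := by
  obtain ⟨t₁, ht₁, t₂, ht₂, hne⟩ := Finset.one_lt_card.mp hT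
  by_contra! hzero
  have hβ : β = 0 := by
    have : (t₁ - t₂) * β = 0 := by linear_combination hzero t₁ ht₁ - hzero t₂ ht₂
    exact (mul_eq_zero.mp this).resolve_left (sub_ne_zero.mpr hne)
  have hα : α = 0 := by simpa [hβ] using hzero t₁ ht₁
  exact h (by simp [hα, hβ])

theorem IsMultiaffine.exists_forall_mem_ne_zero [DecidableEq ι] [NoZeroDivisors R]
    {Φ : (ι → R) → R} (hΦ : IsMultiaffine Φ) {T : Finset R} (hT : 1 < T.card) {b₀ : ι → R}
    (h₀ : Φ b₀ ≠ 0) (S : Finset ι) : ∃ b, (∀ j ∈ S, b j ∈ T) ∧ Φ b ≠ 0 := by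
  induction S using Finset.induction_on with
  | empty => exact ⟨b₀, by simp, h₀⟩
  | insert j S hj ih =>
    obtain ⟨b, hbS, hb⟩ := ih
    obtain ⟨α, β, hαβ⟩ := hΦ j b
    obtain ⟨t, ht, hne⟩ := exists_mem_add_mul_ne_zero hT (t₀ := b j)
      (by rwa [← hαβ, Function.update_eq_self])
    refine ⟨Function.update b j t, fun i hi => ?_, by rwa [hαβ]⟩
    rcases Finset.mem_insert.mp hi with rfl | hiS
    · simpa
    · rw [Function.update_of_ne (by rintro rfl; exact hj hiS)]
      exact hbS i hiS

theorem isMultiaffine_det_mul_diagonal_mul_transpose {m : Type*} [Fintype m] [DecidableEq m]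
    [Fintype ι] [DecidableEq ι] (G : Matrix m ι R) :
    IsMultiaffine fun b : ι → R => (G * diagonal b * Gᵀ).det := by
  intro j b
  set M := G * diagonal (Function.update b j 0) * Gᵀ
  refine ⟨M.det, Gᵀ j ⬝ᵥ M.adjugate *ᵥ Gᵀ j, fun t => ?_⟩
  have hsplit : G * diagonal (Function.update b j t) * Gᵀ = M + vecMulVec (t • Gᵀ j) (Gᵀ j) := by
    have hupd : Function.update b j t =
        fun l => Function.update b j 0 l + Pi.single (M := fun _ => R) j t l := by
      ext l
      by_cases hl : l = j <;> simp [hl]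
    have hsingle : G * diagonal (Pi.single j t) * Gᵀ = vecMulVec (t • Gᵀ j) (Gᵀ j) := by
      ext i i'
      rw [mul_apply]
      simp [mul_diagonal, Pi.single_apply, vecMulVec_apply]
      ring
    rw [hupd, ← diagonal_add, Matrix.mul_add, Matrix.add_mul, hsingle]
  dsimp only
  rw [hsplit, det_add_vecMulVec, mulVec_smul, dotProduct_smul, smul_eq_mul]

end Multiaffine

section GramMatrix

variable {m ι K : Type*} [Field K] [Fintype m] [DecidableEq m] [Fintype ι]

theorem one_lt_card_image_sq [Fintype K] [DecidableEq K] (hK : 3 < Fintype.card K) :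
    1 < ((Finset.univ.erase (0 : K)).image (· ^ 2)).card := by
  have hfiber : ∀ y ∈ (Finset.univ.erase (0 : K)).image (· ^ 2),
      ({x ∈ Finset.univ.erase (0 : K) | x ^ 2 = y}).card ≤ 2 := by
    intro y hy
    obtain ⟨x₀, -, rfl⟩ := Finset.mem_image.mp hy
    calc ({x ∈ Finset.univ.erase (0 : K) | x ^ 2 = x₀ ^ 2}).card
        ≤ ({x₀, -x₀} : Finset K).card := by
          apply Finset.card_le_card
          intro x hx
          simpa [sq_eq_sq_iff_eq_or_eq_neg] using (Finset.mem_filter.mp hx).2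
      _ ≤ 2 := Finset.card_le_two
  have := Finset.card_le_mul_card_image _ 2 hfiber
  rw [Finset.card_erase_of_mem (Finset.mem_univ _), Finset.card_univ] at this
  omega

theorem exists_injective_det_submatrix_ne_zero (G : Matrix m ι K)
    (hG : LinearIndependent K G.row) :
    ∃ s : m → ι, Function.Injective s ∧ (G.submatrix id s).det ≠ 0 := by
  have hspan : Submodule.span K (Set.range G.col) = ⊤ := by
    apply Submodule.eq_top_of_finrank_eq
    rw [← rank_eq_finrank_span_cols, hG.rank_matrix, Module.finrank_fintype_fun_eq_card]
  obtain ⟨κ, c, hc, hcspan, hcli⟩ := exists_linearIndependent' K G.col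
  let B := Module.Basis.mk hcli (by rw [hcspan, hspan])
  let e := B.indexEquiv (Pi.basisFun K m)
  refine ⟨c ∘ e.symm, hc.comp e.symm.injective, ?_⟩
  rw [← isUnit_iff_ne_zero, ← isUnit_iff_isUnit_det, ← linearIndependent_cols_iff_isUnit]
  exact hcli.comp e.symm e.symm.injective

theorem exists_forall_ne_zero_det_mul_diagonal_mul_transpose_ne_zero [Fintype K] [DecidableEq ι]
    (hK : 3 < Fintype.card K) (G : Matrix m ι K) (hG : LinearIndependent K G.row) :
    ∃ a : ι → K, (∀ j, a j ≠ 0) ∧ (G * diagonal a * (G * diagonal a)ᵀ).det ≠ 0 := by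
  classical
  obtain ⟨s, hs, hdet⟩ := exists_injective_det_submatrix_ne_zero G hG
  have h₀ : (G * diagonal ((Set.range s).indicator (1 : ι → K)) * Gᵀ).det ≠ 0 := by
    rw [mul_diagonal_indicator_mul_transpose G hs, det_mul, det_transpose]
    exact mul_ne_zero hdet hdet
  obtain ⟨b, hbT, hb⟩ := (isMultiaffine_det_mul_diagonal_mul_transpose G).exists_forall_mem_ne_zero
    (one_lt_card_image_sq hK) h₀ Finset.univ
  choose a ha hab using fun j => Finset.mem_image.mp (hbT j (Finset.mem_univ j))
  refine ⟨a, fun j => (Finset.mem_erase.mp (ha j)).1, ?_⟩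
  have hgram : G * diagonal a * (G * diagonal a)ᵀ = G * diagonal b * Gᵀ := by
    rw [transpose_mul, diagonal_transpose, Matrix.mul_assoc, ← Matrix.mul_assoc (diagonal a),
      diagonal_mul_diagonal, ← Matrix.mul_assoc]
    congr 3
    funext j
    rw [← hab j, sq]
  rwa [hgram]

theorem span_inf_dualCode_eq_bot_of_det_ne_zero (M : Matrix m ι K) (hM : (M * Mᵀ).det ≠ 0) :
    Submodule.span K (Set.range M.row) ⊓ dualCode (Submodule.span K (Set.range M.row)) = ⊥ := by
  rw [eq_bot_iff]
  rintro x ⟨hx, hxM⟩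
  obtain ⟨y, rfl⟩ := (Submodule.mem_span_range_iff_exists_fun K).mp hx
  have hMx : M *ᵥ (Mᵀ *ᵥ y) = 0 := by
    funext i
    rw [mulVec_transpose, vecMul_eq_sum, Pi.zero_apply, mulVec, dotProduct_comm]
    exact hxM (M i) (Submodule.subset_span ⟨i, rfl⟩)
  have hy : y = 0 := eq_zero_of_mulVec_eq_zero hM (by rwa [← mulVec_mulVec])
  simp [hy]

end GramMatrix

theorem map_scaleMap_span {m F : Type*} [Field F] {n : ℕ} (a : Fin n → F)
    (G : Matrix m (Fin n) F) :
    (Submodule.span F (Set.range G.row)).map (scaleMap a) =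
      Submodule.span F (Set.range (G * diagonal a).row) := by
  rw [Submodule.map_span, ← Set.range_comp]
  congr 2
  ext i j
  simp [scaleMap, mul_comm]

theorem exists_equivalent_euclidean_lcd_general
    (q : ℕ) (hq3 : 3 < q)
    {F : Type*} [Field F] [Fintype F] (hcard : Fintype.card F = q)
    {n : ℕ}
    (C : Submodule F (Fin n → F)) :
    ∃ a : Fin n → F, (∀ j : Fin n, a j ≠ 0) ∧
      (Submodule.map (scaleMap a) C) ⊓ dualCode (Submodule.map (scaleMap a) C) = ⊥ := by
  let B := Module.finBasis F C
  let G : Matrix (Fin (Module.finrank F C)) (Fin n) F := fun i => B i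
  have hG : LinearIndependent F G.row := B.linearIndependent.map' C.subtype C.ker_subtype
  have hC : Submodule.span F (Set.range G.row) = C := by
    rw [show Set.range G.row = C.subtype '' Set.range B by rw [← Set.range_comp]; rfl,
      Submodule.span_image, B.span_eq, Submodule.map_subtype_top]
  obtain ⟨a, ha, hdet⟩ :=
    exists_forall_ne_zero_det_mul_diagonal_mul_transpose_ne_zero (hcard ▸ hq3) G hG
  refine ⟨a, ha, ?_⟩
  rw [← hC, map_scaleMap_span]
  exact span_inf_dualCode_eq_bot_of_det_ne_zero _ hdet

/-- Let `q > 3` be a prime power and `C` an `[n,k,d]` linear code over `F_q`.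
Then there exists `a ∈ F_q^n` with all `a_j ≠ 0` such that `C_a` is an
Euclidean LCD code; hence `C` is equivalent to an Euclidean LCD code. -/
theorem exists_equivalent_euclidean_lcd
    (q : ℕ) (hq : ∃ p m : ℕ, p.Prime ∧ 0 < m ∧ q = p ^ m) (hq3 : 3 < q)
    {F : Type*} [Field F] [Fintype F] [DecidableEq F] (hcard : Fintype.card F = q)
    {n k d : ℕ}
    (C : Submodule F (Fin n → F))
    (hdim : Module.finrank F C = k) (hd : minDist C = d) :
    ∃ a : Fin n → F, (∀ j : Fin n, a j ≠ 0) ∧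
      (Submodule.map (scaleMap a) C) ⊓ dualCode (Submodule.map (scaleMap a) C) = ⊥ :=
  exists_equivalent_euclidean_lcd_general q hq3 hcard C
end

section
/- Let q be a prime power and let C be an [n,k,d] linear code over F_{q²} with generator matrix G = [I_k : P] in standard form. Let M = G·(conj G)ᵀ, where conj G is obtained from G by raising every entry to the q-th power. Let t ≤ k−1 be a non-negative integer such that det(M_I) = 0 for every subset I of {1,…,k} with 0 ≤ |I| ≤ t, and suppose there exists J ⊆ {1,…,k} of size t+1 with det(M_J) ≠ 0. Let a ∈ F_{q²}^n be any word such that a_j^{q+1} ≠ 1 for j ∈ J (i.e., a_j ∈ F_{q²} \ (F_{q²}^×)^{q−1}) and a_j^{q+1} = 1 for j ∈ {1,…,n} \ J (i.e., a_j ∈ (F_{q²}^×)^{q−1}). Then the code C_a is a Hermitian LCD [n,k] linear code. Furthermore, if in addition a_j ≠ 0 for all j, then C_a is a Hermitian LCD [n,k,d] linear code. -/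
open Matrix

/-! Scaling the columns of `G` by `a` turns the Hermitian Gram matrix `M = G Ḡᵀ` into
`M + diag(a_j ^ (q + 1) - 1)`: the correction lives on the identity block of `G`, where it is
nonzero only on `J`. Expanding the determinant in principal minors of `M`, every term but the one
of `J` vanishes, leaving `∏_{j ∈ J} (a_j ^ (q + 1) - 1) · det M_J ≠ 0`. A code spanned by the rows
of a matrix with invertible Hermitian Gram matrix is Hermitian LCD, with these rows as a basis;
scaling by nonzero entries preserves Hamming weights. -/

section Determinant

variable {R : Type*} [Field R] {k : ℕ}

theorem det_eq_det_deleteRC_of_rows_eq_single (N : Matrix (Fin k) (Fin k) R)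
    (S : Finset (Fin k)) (hN : ∀ i ∈ S, N i = Pi.single i 1) :
    N.det = (deleteRC N S).det := by
  let e : {i // i ∈ S} ⊕ {i // i ∉ S} ≃ Fin k := Equiv.sumCompl (· ∈ S)
  have hblock : N.submatrix e e = fromBlocks 1 0 (of fun i j => N i.1 j.1) (deleteRC N S) := by
    ext (i | i) (j | j)
    · simp only [e, submatrix_apply, Equiv.sumCompl_apply_inl, hN i.1 i.2, fromBlocks_apply₁₁,
        Pi.single_apply, one_apply, Subtype.ext_iff, eq_comm]
    · have hji : j.1 ≠ i.1 := fun h => j.2 (h ▸ i.2)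
      simp [e, hN i.1 i.2, hji]
    all_goals rfl
  rw [← det_submatrix_equiv_self e N, hblock, det_fromBlocks_zero₁₂, det_one, one_mul]

theorem det_add_diagonal (M : Matrix (Fin k) (Fin k) R) (d : Fin k → R) :
    (M + diagonal d).det = ∑ S : Finset (Fin k), (∏ j ∈ S, d j) * (deleteRC M S).det := by
  rw [add_comm]
  refine (detRowAlternating.toMultilinearMap.map_add_univ (fun i => diagonal d i) M).trans
    (Finset.sum_congr rfl fun S _ => ?_)
  let N : Matrix (Fin k) (Fin k) R := of (S.piecewise (fun i => Pi.single i 1) M)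
  have hN_mem : ∀ i ∈ S, N i = Pi.single i 1 := fun i hi =>
    S.piecewise_eq_of_mem (fun i => Pi.single i 1) M hi
  have hN_notMem : ∀ i ∉ S, N i = M i := fun i hi =>
    S.piecewise_eq_of_notMem (fun i => Pi.single i 1) M hi
  have hrows : S.piecewise (fun i => diagonal d i) M = S.piecewise (fun i => d i • N i) N :=
    S.piecewise_congr
      (fun i hi => by ext j; simp [hN_mem i hi, diagonal_apply, Pi.single_apply, eq_comm])
      (fun i hi => (hN_notMem i hi).symm)
  have hminor : deleteRC N S = deleteRC M S := by
    ext i j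
    simp [deleteRC, hN_notMem i.1 i.2]
  rw [hrows]
  refine (detRowAlternating.toMultilinearMap.map_piecewise_smul d N S).trans ?_
  change _ * N.det = _
  rw [det_eq_det_deleteRC_of_rows_eq_single N S hN_mem, hminor]

theorem det_add_diagonal_of_minors_eq_zero (M : Matrix (Fin k) (Fin k) R) {d : Fin k → R}
    {J : Finset (Fin k)} (hd : ∀ j ∉ J, d j = 0)
    (hM : ∀ S : Finset (Fin k), S.card < J.card → (deleteRC M S).det = 0) :
    (M + diagonal d).det = (∏ j ∈ J, d j) * (deleteRC M J).det := by
  rw [det_add_diagonal, Fintype.sum_eq_single J]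
  intro S hSJ
  by_cases hSsub : S ⊆ J
  · rw [hM S (Finset.card_lt_card (Finset.ssubset_iff_subset_ne.mpr ⟨hSsub, hSJ⟩)), mul_zero]
  · obtain ⟨j, hjS, hjJ⟩ := Finset.not_subset.mp hSsub
    rw [Finset.prod_eq_zero hjS (hd j hjJ), zero_mul]

end Determinant

section HermitianGram

variable {F : Type*} [Field F] {κ ι : Type*} [Fintype ι]

theorem mul_diagonal_mul_transpose_map_pow [DecidableEq ι] (q : ℕ) (G : Matrix κ ι F)
    (a : ι → F) :
    G * diagonal a * ((G * diagonal a).map (· ^ q))ᵀ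
      = G * diagonal (fun i => a i ^ (q + 1)) * (G.map (· ^ q))ᵀ := by
  have hmap : (G * diagonal a).map (· ^ q) = G.map (· ^ q) * diagonal (fun i => a i ^ q) := by
    ext
    simp [mul_pow]
  rw [hmap, transpose_mul, diagonal_transpose, Matrix.mul_assoc G (diagonal a),
    ← Matrix.mul_assoc (diagonal a), diagonal_mul_diagonal, ← Matrix.mul_assoc]
  simp only [pow_succ']

variable [Fintype κ]

theorem vecMul_dotProduct_pow_row (q : ℕ) (B : Matrix κ ι F) (x : κ → F) (s : κ) :
    (x ᵥ* B) ⬝ᵥ (fun i => B s i ^ q) = (x ᵥ* (B * (B.map (· ^ q))ᵀ)) s := by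
  rw [← vecMul_vecMul, vecMul_transpose, mulVec, dotProduct_comm]
  rfl

variable [DecidableEq κ] {q : ℕ} {B : Matrix κ ι F}

theorem eq_zero_of_forall_dotProduct_pow_row_eq_zero (hB : IsUnit (B * (B.map (· ^ q))ᵀ))
    {x : κ → F} (hx : ∀ s, (x ᵥ* B) ⬝ᵥ (fun i => B s i ^ q) = 0) : x = 0 :=
  vecMul_injective_iff_isUnit.mpr hB <| funext fun s => by
    simpa [← vecMul_dotProduct_pow_row] using hx s

theorem linearIndependent_rows_of_isUnit_gram (hB : IsUnit (B * (B.map (· ^ q))ᵀ)) :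
    LinearIndependent F B :=
  Fintype.linearIndependent_iff.mpr fun x hx => by
    have hx0 : x = 0 := eq_zero_of_forall_dotProduct_pow_row_eq_zero hB fun s => by
      rw [vecMul_eq_sum, hx, zero_dotProduct]
    simp [hx0]

theorem span_rows_inf_hdualCode_eq_bot (hB : IsUnit (B * (B.map (· ^ q))ᵀ)) :
    Submodule.span F (Set.range B) ⊓ hdualCode q (Submodule.span F (Set.range B)) = ⊥ := by
  refine eq_bot_iff.mpr fun v hv => ?_
  obtain ⟨hv_span, hv_dual⟩ := Submodule.mem_inf.mp hv
  obtain ⟨x, rfl⟩ := (Submodule.mem_span_range_iff_exists_fun F).mp hv_span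
  have hx0 : x = 0 := eq_zero_of_forall_dotProduct_pow_row_eq_zero hB fun s => by
    rw [vecMul_eq_sum]
    exact hv_dual (B s) (Submodule.subset_span ⟨s, rfl⟩)
  simp [hx0]

end HermitianGram

section StandardForm

variable {F : Type*} [Field F] {k n q : ℕ} (hkn : k ≤ n)

theorem mul_diagonal_mul_transpose_map_pow_of_stdForm (hq : q ≠ 0)
    {G : Matrix (Fin k) (Fin n) F}
    (hstd : ∀ i j : Fin k, G i (Fin.castLE hkn j) = if i = j then 1 else 0)
    {e : Fin n → F} (he : ∀ i ∉ Set.range (Fin.castLE hkn), e i = 0) :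
    G * diagonal e * (G.map (· ^ q))ᵀ = diagonal (fun j => e (Fin.castLE hkn j)) := by
  ext r s
  rw [mul_apply, ← Fintype.sum_of_injective (Fin.castLE hkn) (Fin.castLE_injective hkn) _ _
    (fun i hi => by simp [mul_diagonal, he i hi]) (fun _ => rfl)]
  by_cases hrs : r = s <;> simp [mul_diagonal, hstd, zero_pow hq, hrs]

theorem map_scaleMap_span_rows (G : Matrix (Fin k) (Fin n) F) (a : Fin n → F) :
    (Submodule.span F (Set.range G)).map (scaleMap a)
      = Submodule.span F (Set.range (G * diagonal a)) := by
  rw [Submodule.map_span]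
  congr 1
  refine (Set.range_comp _ _).symm.trans (congrArg Set.range (funext fun r => ?_))
  ext i
  change a i * G r i = _
  simp [mul_comm]

end StandardForm

section Scaling

variable {F : Type*} [Field F] [DecidableEq F] {n : ℕ} {a : Fin n → F}

theorem hammingNorm_scaleMap (ha : ∀ i, a i ≠ 0) (c : Fin n → F) :
    hammingNorm (scaleMap a c) = hammingNorm c := by
  simp [hammingNorm, scaleMap, ha]

theorem minDist_map_scaleMap (ha : ∀ i, a i ≠ 0) (C : Submodule F (Fin n → F)) :
    minDist (C.map (scaleMap a)) = minDist C := by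
  have hinj : Function.Injective (scaleMap a) := fun u v h =>
    funext fun i => mul_left_cancel₀ (ha i) (congrFun h i)
  unfold minDist
  congr 1
  ext w
  simp only [Set.mem_ofPred_eq, Submodule.mem_map]
  constructor
  · rintro ⟨_, ⟨c, hc, rfl⟩, hne, rfl⟩
    exact ⟨c, hc, fun h => hne (by rw [h, map_zero]), (hammingNorm_scaleMap ha c).symm⟩
  · rintro ⟨c, hc, hne, rfl⟩
    exact ⟨scaleMap a c, ⟨c, hc, rfl⟩, (map_ne_zero_iff _ hinj).mpr hne, hammingNorm_scaleMap ha c⟩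

end Scaling

theorem scaled_code_is_hermitian_lcd_general
    (q : ℕ) (hq : ∃ p m : ℕ, p.Prime ∧ 0 < m ∧ q = p ^ m)
    {F : Type*} [Field F] [DecidableEq F]
    {n k d : ℕ} (hkn : k ≤ n)
    (C : Submodule F (Fin n → F))
    (hd : minDist C = d)
    (G : Matrix (Fin k) (Fin n) F)
    (hstd : ∀ i j : Fin k, G i (Fin.castLE hkn j) = if i = j then 1 else 0)
    (hspan : Submodule.span F (Set.range G) = C)
    (t : ℕ)
    (h0 : ∀ I : Finset (Fin k), I.card ≤ t →
      (deleteRC (G * (G.map (· ^ q))ᵀ) I).det = 0)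
    (J : Finset (Fin k)) (hJcard : J.card = t + 1)
    (hJ : (deleteRC (G * (G.map (· ^ q))ᵀ) J).det ≠ 0)
    (a : Fin n → F)
    (haJ : ∀ j ∈ J, a (Fin.castLE hkn j) ^ (q + 1) ≠ 1)
    (haNJ : ∀ i : Fin n, (∀ j ∈ J, Fin.castLE hkn j ≠ i) → a i ^ (q + 1) = 1) :
    (Submodule.map (scaleMap a) C) ⊓ hdualCode q (Submodule.map (scaleMap a) C) = ⊥
    ∧ Module.finrank F (Submodule.map (scaleMap a) C) = k
    ∧ ((∀ i : Fin n, a i ≠ 0) → minDist (Submodule.map (scaleMap a) C) = d) := by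
  have hq0 : q ≠ 0 := by
    obtain ⟨p, m, hp, -, rfl⟩ := hq
    exact pow_ne_zero m hp.ne_zero
  set e : Fin n → F := fun i => a i ^ (q + 1) - 1
  have he : ∀ i ∉ Set.range (Fin.castLE hkn), e i = 0 := fun i hi =>
    sub_eq_zero.mpr (haNJ i fun j _ hji => hi ⟨j, hji⟩)
  have heJ : ∀ j ∉ J, e (Fin.castLE hkn j) = 0 := fun j hj =>
    sub_eq_zero.mpr (haNJ _ fun j' hj' hj'j => hj (Fin.castLE_injective hkn hj'j ▸ hj'))
  have hgram : G * diagonal a * ((G * diagonal a).map (· ^ q))ᵀ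
      = G * (G.map (· ^ q))ᵀ + diagonal fun j => e (Fin.castLE hkn j) := by
    have hdiag : diagonal (fun i => a i ^ (q + 1)) = 1 + diagonal e := by
      rw [← diagonal_one, diagonal_add]
      simp [e]
    rw [mul_diagonal_mul_transpose_map_pow, hdiag, Matrix.mul_add, Matrix.mul_one, Matrix.add_mul,
      mul_diagonal_mul_transpose_map_pow_of_stdForm hkn hq0 hstd he]
  have hunit : IsUnit (G * diagonal a * ((G * diagonal a).map (· ^ q))ᵀ) := by
    rw [isUnit_iff_isUnit_det, isUnit_iff_ne_zero, hgram,
      det_add_diagonal_of_minors_eq_zero _ heJ fun S hS => h0 S (by omega)]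
    exact mul_ne_zero (Finset.prod_ne_zero_iff.mpr fun j hj => sub_ne_zero.mpr (haJ j hj)) hJ
  rw [← hspan, map_scaleMap_span_rows]
  refine ⟨span_rows_inf_hdualCode_eq_bot hunit, ?_, fun ha => ?_⟩
  · rw [finrank_span_eq_card (linearIndependent_rows_of_isUnit_gram hunit), Fintype.card_fin]
  · rw [← map_scaleMap_span_rows, minDist_map_scaleMap ha, hspan, hd]

/-- Let `C` be an `[n,k,d]` linear code over `F_{q²}` with generator matrix
`G = [I_k : P]` in standard form and `M = G * (conj G)ᵀ`, where `conj G`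
raises every entry of `G` to the `q`-th power.  Suppose `det (M_I) = 0` for
all `I` with `|I| ≤ t ≤ k - 1` and `det (M_J) ≠ 0` for some `J` of size `t+1`.
If `a ∈ F_{q²}^n` satisfies `a_j^{q+1} ≠ 1` for `j ∈ J` and `a_j^{q+1} = 1`
otherwise, then `C_a` is a Hermitian LCD `[n,k]` code; if moreover all
`a_j ≠ 0` then `C_a` is a Hermitian LCD `[n,k,d]` code. -/
theorem scaled_code_is_hermitian_lcd
    (q : ℕ) (hq : ∃ p m : ℕ, p.Prime ∧ 0 < m ∧ q = p ^ m)
    {F : Type*} [Field F] [Fintype F] [DecidableEq F] (hcard : Fintype.card F = q ^ 2)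
    {n k d : ℕ} (hkn : k ≤ n)
    (C : Submodule F (Fin n → F))
    (hdim : Module.finrank F C = k) (hd : minDist C = d)
    (G : Matrix (Fin k) (Fin n) F)
    (hstd : ∀ i j : Fin k, G i (Fin.castLE hkn j) = if i = j then 1 else 0)
    (hspan : Submodule.span F (Set.range G) = C)
    (t : ℕ) (ht : t + 1 ≤ k)
    (h0 : ∀ I : Finset (Fin k), I.card ≤ t →
      (deleteRC (G * (G.map (· ^ q))ᵀ) I).det = 0)
    (J : Finset (Fin k)) (hJcard : J.card = t + 1)
    (hJ : (deleteRC (G * (G.map (· ^ q))ᵀ) J).det ≠ 0)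
    (a : Fin n → F)
    (haJ : ∀ j ∈ J, a (Fin.castLE hkn j) ^ (q + 1) ≠ 1)
    (haNJ : ∀ i : Fin n, (∀ j ∈ J, Fin.castLE hkn j ≠ i) → a i ^ (q + 1) = 1) :
    (Submodule.map (scaleMap a) C) ⊓ hdualCode q (Submodule.map (scaleMap a) C) = ⊥
    ∧ Module.finrank F (Submodule.map (scaleMap a) C) = k
    ∧ ((∀ i : Fin n, a i ≠ 0) → minDist (Submodule.map (scaleMap a) C) = d) :=
  scaled_code_is_hermitian_lcd_general q hq hkn C hd G hstd hspan t h0 J hJcard hJ a haJ haNJ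
end

section
/- Let q be a prime power and let C be an [n,k,d] linear code over F_{q²} with generator matrix G = [I_k : P] in standard form. Let M = G·(conj G)ᵀ, where conj G is obtained from G by raising every entry to the q-th power. Let t ≤ k−1 be a non-negative integer such that det(M_I) = 0 for every subset I of {1,…,k} with 0 ≤ |I| ≤ t, and suppose there exists J ⊆ {1,…,k} of size t+1 with det(M_J) ≠ 0. Then t ≥ h_H(C) − 1, where h_H(C) is the dimension of the Hermitian hull of C. -/
open Matrix

/-!
Every codeword of the Hermitian hull is `x G` for a row vector `x` with `x M = 0`, where
`M = G (Ḡ)ᵀ`, because the `i`-th entry of `x M` is the Hermitian inner product of `x G` with the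
`i`-th row of `G`. Hence `h_H(C) ≤ k - rank M`, and a nonzero principal minor of order `k - (t + 1)`
gives `rank M ≥ k - (t + 1)`.
-/

namespace Matrix

variable {F : Type*} [Field F]

theorem vecMul_mul_transpose_apply {m n o : Type*} [Fintype m] [Fintype n]
    (x : m → F) (A : Matrix m n F) (B : Matrix o n F) (i : o) :
    (x ᵥ* (A * Bᵀ)) i = (x ᵥ* A) ⬝ᵥ B i := by
  rw [← vecMul_vecMul, vecMul_transpose, mulVec, dotProduct_comm]

theorem finrank_ker_vecMulLinear_add_rank {m n : Type*} [Fintype m] [Fintype n]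
    (M : Matrix m n F) :
    Module.finrank F (LinearMap.ker M.vecMulLinear) + M.rank = Fintype.card m := by
  rw [← transpose_transpose M, vecMulLinear_transpose, rank_transpose, add_comm,
    rank, LinearMap.finrank_range_add_finrank_ker, Module.finrank_fintype_fun_eq_card]

theorem card_sub_card_le_rank_of_det_deleteRC_ne_zero {l : ℕ} (M : Matrix (Fin l) (Fin l) F)
    (J : Finset (Fin l)) (hJ : (deleteRC M J).det ≠ 0) : l - J.card ≤ M.rank := by
  have hsub : deleteRC M J = M.submatrix Subtype.val Subtype.val := rfl
  have hrank := rank_of_det_ne_zero (hsub ▸ hJ)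
  rw [Fintype.card_subtype_compl, Fintype.card_fin, Fintype.card_coe] at hrank
  exact hrank ▸ rank_submatrix_le M _ _

end Matrix

section HermitianHull

variable {F : Type*} [Field F] {ι κ : Type*} [Fintype ι] [Fintype κ]

theorem hermitianHull_le_map_ker (q : ℕ) {C : Submodule F (ι → F)} {G : Matrix κ ι F}
    (hspan : Submodule.span F (Set.range G) = C) :
    C ⊓ hdualCode q C ≤
      (LinearMap.ker (G * (G.map (· ^ q))ᵀ).vecMulLinear).map G.vecMulLinear := by
  rintro v ⟨hvC, hvD⟩
  obtain ⟨x, rfl⟩ : v ∈ LinearMap.range G.vecMulLinear := by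
    rw [range_vecMulLinear, row, hspan]
    exact hvC
  refine ⟨x, funext fun i => ?_, rfl⟩
  have hrow : G i ∈ C := hspan ▸ Submodule.subset_span ⟨i, rfl⟩
  exact (vecMul_mul_transpose_apply x G _ i).trans (hvD (G i) hrow)

theorem finrank_hermitianHull_add_rank_le (q : ℕ) {C : Submodule F (ι → F)} {G : Matrix κ ι F}
    (hspan : Submodule.span F (Set.range G) = C) :
    Module.finrank F ↥(C ⊓ hdualCode q C) + (G * (G.map (· ^ q))ᵀ).rank ≤ Fintype.card κ := by
  rw [← finrank_ker_vecMulLinear_add_rank (G * (G.map (· ^ q))ᵀ)]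
  gcongr
  exact (Submodule.finrank_mono (hermitianHull_le_map_ker q hspan)).trans
    (Submodule.finrank_map_le _ _)

end HermitianHull

theorem hermitian_hull_dim_le_of_principal_minor_nonzero_general
    (q : ℕ) {F : Type*} [Field F] {n k : ℕ} (C : Submodule F (Fin n → F))
    (G : Matrix (Fin k) (Fin n) F) (hspan : Submodule.span F (Set.range G) = C) (t : ℕ)
    (J : Finset (Fin k)) (hJcard : J.card = t + 1)
    (hJ : (deleteRC (G * (G.map (· ^ q))ᵀ) J).det ≠ 0) :
    Module.finrank F ↥(C ⊓ hdualCode q C) ≤ t + 1 := by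
  have hhull := finrank_hermitianHull_add_rank_le q hspan
  have hrank := card_sub_card_le_rank_of_det_deleteRC_ne_zero _ J hJ
  rw [Fintype.card_fin] at hhull
  omega

/-- Let `C` be an `[n,k,d]` linear code over `F_{q²}` with generator matrix
`G = [I_k : P]` in standard form and `M = G * (conj G)ᵀ`.  Suppose
`det (M_I) = 0` for every `I` with `|I| ≤ t ≤ k - 1`, and `det (M_J) ≠ 0` for
some `J` of size `t + 1`.  Then `t ≥ h_H(C) - 1`, i.e. `h_H(C) ≤ t + 1`, where
`h_H(C)` is the dimension of the Hermitian hull `C ⊓ C^{⊥_H}`. -/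
theorem hermitian_hull_dim_le_of_principal_minor_nonzero
    (q : ℕ) (hq : ∃ p m : ℕ, p.Prime ∧ 0 < m ∧ q = p ^ m)
    {F : Type*} [Field F] [Fintype F] [DecidableEq F] (hcard : Fintype.card F = q ^ 2)
    {n k d : ℕ} (hkn : k ≤ n)
    (C : Submodule F (Fin n → F))
    (hdim : Module.finrank F C = k) (hd : minDist C = d)
    (G : Matrix (Fin k) (Fin n) F)
    (hstd : ∀ i j : Fin k, G i (Fin.castLE hkn j) = if i = j then 1 else 0)
    (hspan : Submodule.span F (Set.range G) = C)
    (t : ℕ) (ht : t + 1 ≤ k)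
    (h0 : ∀ I : Finset (Fin k), I.card ≤ t →
      (deleteRC (G * (G.map (· ^ q))ᵀ) I).det = 0)
    (J : Finset (Fin k)) (hJcard : J.card = t + 1)
    (hJ : (deleteRC (G * (G.map (· ^ q))ᵀ) J).det ≠ 0) :
    Module.finrank F ↥(C ⊓ hdualCode q C) ≤ t + 1 :=
  hermitian_hull_dim_le_of_principal_minor_nonzero_general q C G hspan t J hJcard hJ
end

section
/- Let q be a prime power and let C be an [n,k] linear code over F_q with h := h_E(C) > 0. Let c¹,…,c^k be a basis of C such that c¹,…,c^h is a basis of the Euclidean hull Hull_E(C). Then the subspace Span{c^{h+1}, c^{h+2}, …, c^k} is an Euclidean LCD code. -/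
open Matrix

/-! The hull `C ⊓ C^⊥` is orthogonal to all of `C`, so a vector of a complement `D` of the hull
in `C` that is orthogonal to `D` is orthogonal to `C = hull ⊔ D`; it then lies in the hull, hence
in `hull ⊓ D = 0`. -/

section

variable {F ι : Type*} [Field F] [Fintype ι]

theorem le_dualCode_comm {A B : Submodule F (ι → F)} :
    A ≤ dualCode B ↔ B ≤ dualCode A :=
  ⟨fun hAB b hb a ha => by rw [dotProduct_comm]; exact hAB ha b hb,
    fun hBA a ha b hb => by rw [dotProduct_comm]; exact hBA hb a ha⟩

theorem dualCode_sup (A B : Submodule F (ι → F)) :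
    dualCode (A ⊔ B) = dualCode A ⊓ dualCode B := by
  apply le_antisymm
  · intro x hx
    exact ⟨fun a ha => hx a (Submodule.mem_sup_left ha),
      fun b hb => hx b (Submodule.mem_sup_right hb)⟩
  · rintro x ⟨hxA, hxB⟩ y hy
    obtain ⟨a, ha, b, hb, rfl⟩ := Submodule.mem_sup.mp hy
    rw [dotProduct_add, hxA a ha, hxB b hb, add_zero]

theorem inf_dualCode_eq_bot_of_sup_hull {A C D : Submodule F (ι → F)}
    (hhull : A = C ⊓ dualCode C) (hsup : A ⊔ D = C) (hdisj : Disjoint A D) :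
    D ⊓ dualCode D = ⊥ := by
  rw [Submodule.eq_bot_iff]
  rintro x ⟨hxD, hxD'⟩
  have hxC : x ∈ C := hsup ▸ Submodule.mem_sup_right hxD
  have hxA' : x ∈ dualCode A :=
    le_dualCode_comm.mp (hhull ▸ inf_le_right : A ≤ dualCode C) hxC
  have hxC' : x ∈ dualCode C := hsup ▸ (dualCode_sup A D).ge ⟨hxA', hxD'⟩
  have hxA : x ∈ A := hhull ▸ ⟨hxC, hxC'⟩
  exact Submodule.disjoint_def.mp hdisj x hxA hxD

end

theorem Submodule.span_image_sup_span_image_compl {R M κ : Type*} [Semiring R]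
    [AddCommMonoid M] [Module R M] (v : κ → M) (s : Set κ) :
    span R (v '' s) ⊔ span R (v '' sᶜ) = span R (Set.range v) := by
  rw [← span_union, ← Set.image_union, Set.union_compl_self, Set.image_univ]

theorem span_complement_of_hull_is_lcd_general
    {F : Type*} [Field F]
    {n k : ℕ}
    (C : Submodule F (Fin n → F))
    (h : ℕ)
    (c : Fin k → (Fin n → F))
    (hindep : LinearIndependent F c)
    (hspan : Submodule.span F (Set.range c) = C)
    (hhull : Submodule.span F (c '' {i : Fin k | (i : ℕ) < h}) = C ⊓ dualCode C) :
    Submodule.span F (c '' {i : Fin k | h ≤ (i : ℕ)}) ⊓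
      dualCode (Submodule.span F (c '' {i : Fin k | h ≤ (i : ℕ)})) = ⊥ := by
  have htail : {i : Fin k | h ≤ (i : ℕ)} = {i : Fin k | (i : ℕ) < h}ᶜ := by
    ext i
    simp
  rw [htail]
  refine inf_dualCode_eq_bot_of_sup_hull hhull ?_ ?_
  · rw [Submodule.span_image_sup_span_image_compl, hspan]
  · exact hindep.disjoint_span_image disjoint_compl_right

/-- Let `C` be an `[n,k]` linear code over `F_q` whose Euclidean hull
`Hull_E(C) = C ⊓ C^⊥` has dimension `h > 0`.  If `c 0, …, c (k-1)` is a basis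
of `C` whose first `h` vectors form a basis of `Hull_E(C)`, then the span of
the remaining vectors `c h, …, c (k-1)` is an Euclidean LCD code. -/
theorem span_complement_of_hull_is_lcd
    (q : ℕ) (hq : ∃ p m : ℕ, p.Prime ∧ 0 < m ∧ q = p ^ m)
    {F : Type*} [Field F] [Fintype F] (hcard : Fintype.card F = q)
    {n k : ℕ}
    (C : Submodule F (Fin n → F)) (hdim : Module.finrank F C = k)
    (h : ℕ) (hh : h = Module.finrank F ↥(C ⊓ dualCode C)) (hpos : 0 < h)
    (c : Fin k → (Fin n → F))
    (hindep : LinearIndependent F c)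
    (hspan : Submodule.span F (Set.range c) = C)
    (hhull : Submodule.span F (c '' {i : Fin k | (i : ℕ) < h}) = C ⊓ dualCode C) :
    Submodule.span F (c '' {i : Fin k | h ≤ (i : ℕ)}) ⊓
      dualCode (Submodule.span F (c '' {i : Fin k | h ≤ (i : ℕ)})) = ⊥ :=
  span_complement_of_hull_is_lcd_general C h c hindep hspan hhull
end

section
/- Let q be a prime power. If there exists an [n,k,d] linear code C over F_q with h := h_E(C) > 0, then there exists an Euclidean LCD linear code over F_q of length n+h, dimension k, and minimum distance at least d. -/
open Matrix

/-!
Let `H = C ∩ C^⊥` have dimension `h` and extend a linear isomorphism `H ≃ F^h` to a linear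
map `ψ` on all of `F^n`. The code `D = {(c, ψ c) : c ∈ C}` has the same dimension as `C` and
weights at least those of `C`. If `(c, ψ c) ∈ D^⊥`, pairing it with `(c', ψ c')` for `c' ∈ H`
gives `ψ c ⬝ ψ c' = 0`; as `ψ c'` ranges over `F^h`, `ψ c = 0`. Then `c ∈ C^⊥`, so `c ∈ H`
with `ψ c = 0`, whence `c = 0`.
-/

theorem exists_linearMap_bijective_domRestrict {K V : Type*} [DivisionRing K] [AddCommGroup V]
    [Module K V] (p : Submodule K V) [FiniteDimensional K p] {m : ℕ}
    (hm : Module.finrank K p = m) :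
    ∃ ψ : V →ₗ[K] (Fin m → K), Function.Bijective (ψ.domRestrict p) := by
  let e : p ≃ₗ[K] (Fin m → K) := (Module.finBasisOfFinrankEq K p hm).equivFun
  obtain ⟨ψ, hψ⟩ := LinearMap.exists_extend e.toLinearMap
  refine ⟨ψ, ?_⟩
  rw [LinearMap.domRestrict, hψ]
  exact e.bijective

section Append

variable {R : Type*} {m n : ℕ}

theorem dotProduct_append [NonUnitalNonAssocSemiring R] (a c : Fin m → R) (b e : Fin n → R) :
    Fin.append a b ⬝ᵥ Fin.append c e = a ⬝ᵥ c + b ⬝ᵥ e := by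
  simp only [dotProduct, Fin.sum_univ_add, Fin.append_left, Fin.append_right]

theorem hammingNorm_append [Zero R] [DecidableEq R] (a : Fin m → R) (b : Fin n → R) :
    hammingNorm (Fin.append a b) = hammingNorm a + hammingNorm b := by
  simp only [hammingNorm, Finset.card_filter, Fin.sum_univ_add, Fin.append_left, Fin.append_right]

end Append

section Codes

variable {F : Type*} [Field F] {ι κ : Type*} [Fintype ι] [Fintype κ]

theorem minDist_le_hammingNorm [DecidableEq F] {C : Submodule F (ι → F)} {c : ι → F}
    (hc : c ∈ C) (hc0 : c ≠ 0) : minDist C ≤ hammingNorm c :=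
  Nat.sInf_le ⟨c, hc, hc0, rfl⟩

theorem minDist_le_minDist_map [DecidableEq F] (C : Submodule F (ι → F))
    (f : (ι → F) →ₗ[F] (κ → F)) (hf : ∀ x, hammingNorm x ≤ hammingNorm (f x)) :
    minDist C ≤ minDist (C.map f) := by
  have hne : ∀ c ∈ C, c ≠ 0 → f c ≠ 0 := fun c _ hc0 hfc =>
    hc0 (hammingNorm_eq_zero.mp (Nat.le_zero.mp (by simpa [hfc] using hf c)))
  unfold minDist
  rcases Set.eq_empty_or_nonempty {w | ∃ c ∈ C.map f, c ≠ 0 ∧ hammingNorm c = w} with hT | hT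
  · rw [hT, Nat.sInf_empty, Nat.le_zero, Nat.sInf_eq_zero]
    refine Or.inr (Set.eq_empty_of_forall_notMem ?_)
    rintro _ ⟨c, hc, hc0, rfl⟩
    exact hT.subset ⟨f c, Submodule.mem_map_of_mem hc, hne c hc hc0, rfl⟩
  · obtain ⟨_, hx, hc0, hw⟩ := Nat.sInf_mem hT
    obtain ⟨c, hc, rfl⟩ := Submodule.mem_map.mp hx
    rw [← hw]
    exact (minDist_le_hammingNorm hc fun h => hc0 (by simp [h])).trans (hf c)

end Codes

section Graph

variable {F : Type*} [Field F] {n m : ℕ}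

def appendGraph (ψ : (Fin n → F) →ₗ[F] (Fin m → F)) : (Fin n → F) →ₗ[F] (Fin (n + m) → F) where
  toFun x := Fin.append x (ψ x)
  map_add' x y := by
    funext i
    refine Fin.addCases (fun i => ?_) (fun i => ?_) i <;> simp
  map_smul' r x := by
    funext i
    refine Fin.addCases (fun i => ?_) (fun i => ?_) i <;> simp

theorem appendGraph_apply (ψ : (Fin n → F) →ₗ[F] (Fin m → F)) (x : Fin n → F) :
    appendGraph ψ x = Fin.append x (ψ x) :=
  rfl

theorem hammingNorm_le_hammingNorm_appendGraph [DecidableEq F]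
    (ψ : (Fin n → F) →ₗ[F] (Fin m → F)) (x : Fin n → F) :
    hammingNorm x ≤ hammingNorm (appendGraph ψ x) := by
  rw [appendGraph_apply, hammingNorm_append]
  exact Nat.le_add_right _ _

theorem appendGraph_injective (ψ : (Fin n → F) →ₗ[F] (Fin m → F)) :
    Function.Injective (appendGraph ψ) := by
  intro x y hxy
  funext i
  simpa [appendGraph_apply] using congrFun hxy (Fin.castAdd m i)

theorem map_appendGraph_inf_dualCode_eq_bot (C : Submodule F (Fin n → F))
    (ψ : (Fin n → F) →ₗ[F] (Fin m → F))
    (hψ : Function.Bijective (ψ.domRestrict (C ⊓ dualCode C))) :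
    C.map (appendGraph ψ) ⊓ dualCode (C.map (appendGraph ψ)) = ⊥ := by
  rw [eq_bot_iff]
  rintro _ ⟨⟨c, hc, rfl⟩, hdual⟩
  have hdot : ∀ c' ∈ C, c ⬝ᵥ c' + ψ c ⬝ᵥ ψ c' = 0 := fun c' hc' => by
    simpa only [appendGraph_apply, dotProduct_append] using
      hdual _ (Submodule.mem_map_of_mem hc')
  have hψc : ψ c = 0 := by
    refine dotProduct_eq_zero _ fun v => ?_
    obtain ⟨⟨c', hc'C, hc'dual⟩, rfl⟩ := hψ.2 v
    have hcc' : c ⬝ᵥ c' = 0 := by rw [dotProduct_comm]; exact hc'dual c hc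
    simpa [hcc'] using hdot c' hc'C
  have hc_dual : c ∈ dualCode C := fun c' hc' => by
    simpa [hψc] using hdot c' hc'
  have hc0 : c = 0 := by
    have := @hψ.1 ⟨c, hc, hc_dual⟩ 0 (by simpa using hψc)
    simpa using congrArg Subtype.val this
  simp [hc0]

end Graph

theorem exists_lcd_code_of_code_with_hull_general
    {F : Type*} [Field F] [DecidableEq F]
    {n k d : ℕ}
    (C : Submodule F (Fin n → F))
    (hdim : Module.finrank F C = k) (hd : minDist C = d)
    (h : ℕ) (hh : h = Module.finrank F ↥(C ⊓ dualCode C)) :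
    ∃ D : Submodule F (Fin (n + h) → F),
      Module.finrank F D = k ∧ d ≤ minDist D ∧ D ⊓ dualCode D = ⊥ := by
  obtain ⟨ψ, hψ⟩ := exists_linearMap_bijective_domRestrict (C ⊓ dualCode C) hh.symm
  refine ⟨C.map (appendGraph ψ), ?_, ?_, map_appendGraph_inf_dualCode_eq_bot C ψ hψ⟩
  · rw [← hdim]
    exact (Submodule.equivMapOfInjective _ (appendGraph_injective ψ) C).finrank_eq.symm
  · exact hd ▸ minDist_le_minDist_map C _ (hammingNorm_le_hammingNorm_appendGraph ψ)

/-- If there is an `[n,k,d]` linear code `C` over `F_q` whose Euclidean hull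
has dimension `h > 0`, then there is an Euclidean LCD linear code over `F_q`
of length `n + h`, dimension `k`, and minimum distance at least `d`. -/
theorem exists_lcd_code_of_code_with_hull
    (q : ℕ) (hq : ∃ p m : ℕ, p.Prime ∧ 0 < m ∧ q = p ^ m)
    {F : Type*} [Field F] [Fintype F] [DecidableEq F] (hcard : Fintype.card F = q)
    {n k d : ℕ}
    (C : Submodule F (Fin n → F))
    (hdim : Module.finrank F C = k) (hd : minDist C = d)
    (h : ℕ) (hh : h = Module.finrank F ↥(C ⊓ dualCode C)) (hpos : 0 < h) :
    ∃ D : Submodule F (Fin (n + h) → F),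
      Module.finrank F D = k ∧ d ≤ minDist D ∧ D ⊓ dualCode D = ⊥ :=
  exists_lcd_code_of_code_with_hull_general C hdim hd h hh
end

section
/- Let q be a prime power with q > 3. Then α_q^E(δ) = α_q^lin(δ) for every δ ∈ [0,1]; that is, the largest asymptotic information rate achievable by Euclidean LCD codes over F_q at asymptotic relative minimum distance δ equals that achievable by arbitrary linear codes over F_q. -/
open Matrix Filter

/-- `ULin F` is the set of pairs `(δ, R) ∈ [0,1]²` for which there is a
sequence of `[nᵢ, kᵢ, dᵢ]` linear codes over `F` with `nᵢ → ∞`,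
`dᵢ/nᵢ → δ` and `kᵢ/nᵢ → R`. -/
def ULin (F : Type*) [Field F] [Fintype F] [DecidableEq F] : Set (ℝ × ℝ) :=
  {p | p ∈ Set.Icc (0 : ℝ) 1 ×ˢ Set.Icc (0 : ℝ) 1 ∧
    ∃ (nn kk dd : ℕ → ℕ) (C : (i : ℕ) → Submodule F (Fin (nn i) → F)),
      (∀ i, Module.finrank F (C i) = kk i) ∧
      (∀ i, minDist (C i) = dd i) ∧
      Tendsto nn atTop atTop ∧
      Tendsto (fun i => (dd i : ℝ) / (nn i : ℝ)) atTop (nhds p.1) ∧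
      Tendsto (fun i => (kk i : ℝ) / (nn i : ℝ)) atTop (nhds p.2)}

/-- `UE F` is the analogous set where all codes in the sequence are required
to be Euclidean LCD codes. -/
def UE (F : Type*) [Field F] [Fintype F] [DecidableEq F] : Set (ℝ × ℝ) :=
  {p | p ∈ Set.Icc (0 : ℝ) 1 ×ˢ Set.Icc (0 : ℝ) 1 ∧
    ∃ (nn kk dd : ℕ → ℕ) (C : (i : ℕ) → Submodule F (Fin (nn i) → F)),
      (∀ i, Module.finrank F (C i) = kk i) ∧
      (∀ i, minDist (C i) = dd i) ∧
      (∀ i, C i ⊓ dualCode (C i) = ⊥) ∧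
      Tendsto nn atTop atTop ∧
      Tendsto (fun i => (dd i : ℝ) / (nn i : ℝ)) atTop (nhds p.1) ∧
      Tendsto (fun i => (kk i : ℝ) / (nn i : ℝ)) atTop (nhds p.2)}

/-- `α_q^lin(δ)`: the largest asymptotic information rate of linear codes over
`F` at asymptotic relative minimum distance `δ`. -/
noncomputable def alphaLin (F : Type*) [Field F] [Fintype F] [DecidableEq F]
    (δ : ℝ) : ℝ :=
  sSup {R : ℝ | R ∈ Set.Icc (0 : ℝ) 1 ∧ (δ, R) ∈ ULin F}

/-- `α_q^E(δ)`: the largest asymptotic information rate of Euclidean LCD codes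
over `F` at asymptotic relative minimum distance `δ`. -/
noncomputable def alphaE (F : Type*) [Field F] [Fintype F] [DecidableEq F]
    (δ : ℝ) : ℝ :=
  sSup {R : ℝ | R ∈ Set.Icc (0 : ℝ) 1 ∧ (δ, R) ∈ UE F}

/-!
Scaling the coordinates of a code by units `v` preserves its dimension and minimum distance,
and if `G` generates the code, the scaled code is generated by `G * diagonal v`; it is LCD as
soon as its Gram determinant `det (G * diagonal (v²) * Gᵀ)` is nonzero. As a function of
`d = v²` this determinant is affine in each coordinate, since changing one `d j` is a rank-one
update, and it is nonzero at the indicator of an information set. Moving the coordinates one at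
a time into two-element sets keeps an affine function nonzero, so some `d ∈ {1, c²}ⁿ` works,
where `c ∉ {0, 1, -1}` exists as soon as `q > 3`. Hence every linear code is equivalent to an
LCD code with the same length, dimension and minimum distance, and `U_q^E = U_q^lin`.
-/

theorem Matrix.exists_det_add_smul_vecMulVec {n R : Type*} [Fintype n] [DecidableEq n]
    [CommRing R] (A : Matrix n n R) (u v : n → R) :
    ∃ β : R, ∀ t : R, (A + t • vecMulVec u v).det = A.det + β * t := by
  -- By the Schur complement, `det (A + t • u vᵀ)` is the determinant of a block matrix in
  -- which `t` occurs only in the last column.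
  let N : R → Matrix (n ⊕ Unit) (n ⊕ Unit) R := fun t =>
    fromBlocks A (replicateCol Unit (t • u)) (replicateRow Unit (-v)) 1
  have hN : ∀ t, (N t).det = (A + t • vecMulVec u v).det := fun t => by
    rw [det_fromBlocks_one₂₂, ← vecMulVec_eq, vecMulVec_neg, sub_neg_eq_add, smul_vecMulVec]
  have hcol : ∀ t,
      N t = (N 0).updateCol (.inr ()) (Sum.elim (0 : n → R) 1 + t • Sum.elim u 0) := by
    intro t
    ext (i | i) (j | j) <;> simp [N]
  have h0 : (N 0).updateCol (.inr ()) (Sum.elim (0 : n → R) 1) = N 0 := by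
    ext (i | i) (j | j) <;> simp [N]
  refine ⟨((N 0).updateCol (.inr ()) (Sum.elim u (0 : Unit → R))).det, fun t => ?_⟩
  rw [← hN, hcol, det_updateCol_add, det_updateCol_smul, h0, hN, zero_smul, add_zero, mul_comm]

theorem Matrix.exists_det_mul_diagonal_update_mul_transpose_eq {m n R : Type*} [Fintype m]
    [DecidableEq m] [Fintype n] [DecidableEq n] [CommRing R] (G : Matrix m n R) (d : n → R)
    (j : n) : ∃ a β : R, ∀ t, (G * diagonal (Function.update d j t) * Gᵀ).det = a + β * t := by
  have hrank_one : ∀ t, G * diagonal (Function.update d j t) * Gᵀ =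
      G * diagonal (Function.update d j 0) * Gᵀ + t • vecMulVec (G.col j) (G.col j) := by
    intro t
    have hupdate : Function.update d j t = Function.update d j 0 + Pi.single j t := by
      ext s; rcases eq_or_ne s j with rfl | h <;> simp [*]
    ext i i'
    rw [Matrix.add_apply, mul_apply, mul_apply]
    simp only [mul_diagonal, transpose_apply, hupdate, Pi.add_apply, mul_add, add_mul,
      Finset.sum_add_distrib, Pi.single_apply, mul_ite, ite_mul, mul_zero, zero_mul,
      Finset.sum_ite_eq', Finset.mem_univ, if_true, smul_apply, vecMulVec_apply, col_apply,
      smul_eq_mul, add_right_inj]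
    ring
  obtain ⟨β, hβ⟩ := exists_det_add_smul_vecMulVec (G * diagonal (Function.update d j 0) * Gᵀ)
    (G.col j) (G.col j)
  exact ⟨_, β, fun t => by rw [hrank_one, hβ]⟩

theorem Matrix.exists_det_submatrix_ne_zero {m n K : Type*} [Fintype m] [DecidableEq m]
    [Fintype n] [Field K] (G : Matrix m n K) (hG : LinearIndependent K G.row) :
    ∃ e : m ↪ n, (G.submatrix id e).det ≠ 0 := by
  have hspan : Submodule.span K (Set.range G.col) = ⊤ := by
    apply Submodule.eq_top_of_finrank_eq
    rw [← rank_eq_finrank_span_cols, hG.rank_matrix, Module.finrank_fintype_fun_eq_card]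
  obtain ⟨κ, a, ha, haspan, hali⟩ := exists_linearIndependent' K G.col
  let B : Module.Basis κ K (m → K) := .mk hali (by rw [haspan, hspan])
  let σ := (Pi.basisFun K m).indexEquiv B
  refine ⟨⟨a ∘ σ, ha.comp σ.injective⟩, ?_⟩
  rw [← isUnit_iff_ne_zero, ← isUnit_iff_isUnit_det, ← linearIndependent_cols_iff_isUnit]
  exact hali.comp σ σ.injective

theorem Matrix.exists_det_mul_diagonal_mul_transpose_ne_zero {m n K : Type*} [Fintype m]
    [DecidableEq m] [Fintype n] [DecidableEq n] [Field K] (G : Matrix m n K)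
    (hG : LinearIndependent K G.row) : ∃ d : n → K, (G * diagonal d * Gᵀ).det ≠ 0 := by
  obtain ⟨e, he⟩ := G.exists_det_submatrix_ne_zero hG
  let d : n → K := fun s => if s ∈ Finset.univ.map e then 1 else 0
  have hd : G * diagonal d * Gᵀ = G.submatrix id e * (G.submatrix id e)ᵀ := by
    ext i i'
    rw [mul_apply, mul_apply]
    simp only [mul_diagonal, transpose_apply, submatrix_apply, id, d, mul_ite, ite_mul, mul_one,
      zero_mul, mul_zero, Finset.sum_ite_mem, Finset.univ_inter, Finset.sum_map]
  refine ⟨d, ?_⟩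
  rw [hd, det_mul, det_transpose]
  exact mul_ne_zero he he

theorem exists_mem_add_mul_ne_zero_s15 {R : Type*} [CommRing R] [IsDomain R] {a β t₀ : R}
    (h : a + β * t₀ ≠ 0) {S : Finset R} (hS : 1 < S.card) : ∃ t ∈ S, a + β * t ≠ 0 := by
  by_contra! hzero
  obtain ⟨t₁, ht₁, t₂, ht₂, hne⟩ := Finset.one_lt_card.mp hS
  have hβ : β = 0 := by
    have : β * (t₁ - t₂) = 0 := by linear_combination hzero t₁ ht₁ - hzero t₂ ht₂
    exact (mul_eq_zero.mp this).resolve_right (sub_ne_zero.mpr hne)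
  have ha : a = 0 := by simpa [hβ] using hzero t₁ ht₁
  exact h (by simp [ha, hβ])

theorem exists_forall_mem_ne_zero_of_affine {ι R : Type*} [Fintype ι] [DecidableEq ι]
    [CommRing R] [IsDomain R] (f : (ι → R) → R)
    (hf : ∀ d j, ∃ a β : R, ∀ t, f (Function.update d j t) = a + β * t)
    {S : ι → Finset R} (hS : ∀ j, 1 < (S j).card) {d₀ : ι → R} (hd₀ : f d₀ ≠ 0) :
    ∃ d, (∀ j, d j ∈ S j) ∧ f d ≠ 0 := by
  suffices ∀ s : Finset ι, ∃ d, (∀ j ∈ s, d j ∈ S j) ∧ f d ≠ 0 by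
    simpa using this Finset.univ
  intro s
  induction s using Finset.induction_on with
  | empty => exact ⟨d₀, by simp, hd₀⟩
  | insert j s hj ih =>
    obtain ⟨d, hdS, hd⟩ := ih
    obtain ⟨a, β, hline⟩ := hf d j
    obtain ⟨t, htS, ht⟩ := exists_mem_add_mul_ne_zero_s15 (t₀ := d j)
      (by rwa [← hline, Function.update_eq_self]) (hS j)
    refine ⟨Function.update d j t, fun i hi => ?_, by rwa [hline]⟩
    rcases eq_or_ne i j with rfl | hij
    · simpa using htS
    · simpa [hij] using hdS i ((Finset.mem_insert.mp hi).resolve_left hij)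

theorem span_row_inf_dualCode_eq_bot_of_det_ne_zero {m ι F : Type*} [Fintype m] [DecidableEq m]
    [Fintype ι] [Field F] (G : Matrix m ι F) (hG : (G * Gᵀ).det ≠ 0) :
    Submodule.span F (Set.range G.row) ⊓ dualCode (Submodule.span F (Set.range G.row)) = ⊥ := by
  rw [eq_bot_iff]
  rintro x ⟨hxC, hxdual⟩
  rw [SetLike.mem_coe, ← range_vecMulLinear] at hxC
  obtain ⟨y, rfl⟩ := hxC
  have hy : y ᵥ* (G * Gᵀ) = 0 := by
    ext i
    rw [← vecMul_vecMul, vecMul_transpose, mulVec, dotProduct_comm]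
    exact hxdual (G i) (Submodule.subset_span ⟨i, rfl⟩)
  simp [eq_zero_of_vecMul_eq_zero hG hy]

def coordScaling {ι F : Type*} [Field F] (v : ι → Fˣ) : (ι → F) ≃ₗ[F] (ι → F) :=
  LinearEquiv.piCongrRight fun i => LinearEquiv.smulOfUnit (v i)

theorem coordScaling_apply {ι F : Type*} [Field F] (v : ι → Fˣ) (x : ι → F) (i : ι) :
    coordScaling v x i = v i * x i :=
  rfl

theorem hammingNorm_coordScaling {ι F : Type*} [Fintype ι] [Field F] [DecidableEq F]
    (v : ι → Fˣ) (x : ι → F) : hammingNorm (coordScaling v x) = hammingNorm x := by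
  simp [hammingNorm, coordScaling_apply]

theorem minDist_map_of_hammingNorm_eq {ι ι' F : Type*} [Fintype ι] [Fintype ι'] [Field F]
    [DecidableEq F] (e : (ι → F) ≃ₗ[F] (ι' → F)) (he : ∀ x, hammingNorm (e x) = hammingNorm x)
    (C : Submodule F (ι → F)) : minDist (C.map e.toLinearMap) = minDist C := by
  unfold minDist
  congr 1
  ext w
  constructor
  · rintro ⟨_, ⟨x, hx, rfl⟩, hne, rfl⟩
    exact ⟨x, hx, by simpa using hne, (he x).symm⟩
  · rintro ⟨x, hx, hne, rfl⟩
    exact ⟨e x, Submodule.mem_map_of_mem hx, by simpa using hne, he x⟩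

theorem map_coordScaling_span_row {m ι F : Type*} [Fintype ι] [DecidableEq ι] [Field F]
    (v : ι → Fˣ) (G : Matrix m ι F) :
    (Submodule.span F (Set.range G.row)).map (coordScaling v).toLinearMap =
      Submodule.span F (Set.range (G * diagonal fun i => (v i : F)).row) := by
  rw [Submodule.map_span, ← Set.range_comp]
  congr
  ext i s
  simp [coordScaling_apply, mul_diagonal, mul_comm]

theorem exists_ne_zero_sq_ne_one_of_three_lt_card {F : Type*} [Field F] [Fintype F]
    (hF : 3 < Fintype.card F) : ∃ c : F, c ≠ 0 ∧ c ^ 2 ≠ 1 := by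
  classical
  obtain ⟨c, -, hc⟩ := Finset.exists_mem_notMem_of_card_lt_card
    (s := {0, 1, -1}) (t := Finset.univ) (Finset.card_le_three.trans_lt hF)
  simp only [Finset.mem_insert, Finset.mem_singleton, not_or] at hc
  exact ⟨c, hc.1, by rw [sq, Ne, mul_self_eq_one_iff]; tauto⟩

theorem exists_map_coordScaling_inf_dualCode_eq_bot {ι F : Type*} [Fintype ι] [Field F] {c : F}
    (hc : c ≠ 0) (hc2 : c ^ 2 ≠ 1) (C : Submodule F (ι → F)) :
    ∃ v : ι → Fˣ, C.map (coordScaling v).toLinearMap ⊓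
      dualCode (C.map (coordScaling v).toLinearMap) = ⊥ := by
  classical
  let b := Module.finBasis F C
  let G : Matrix (Fin (Module.finrank F C)) ι F := Matrix.of fun i => (b i : ι → F)
  have hG : LinearIndependent F G.row := b.linearIndependent.map' C.subtype C.ker_subtype
  have hGC : Submodule.span F (Set.range G.row) = C := by
    rw [show Set.range G.row = C.subtype '' Set.range b from Set.range_comp C.subtype b,
      Submodule.span_image, b.span_eq, Submodule.map_subtype_top]
  obtain ⟨d₀, hd₀⟩ := G.exists_det_mul_diagonal_mul_transpose_ne_zero hG
  obtain ⟨d, hdS, hd⟩ := exists_forall_mem_ne_zero_of_affine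
    (fun d : ι → F => (G * diagonal d * Gᵀ).det) G.exists_det_mul_diagonal_update_mul_transpose_eq
    (S := fun _ => {1, c ^ 2})
    (fun _ => by rw [Finset.card_pair (Ne.symm hc2)]; omega) hd₀
  have hroot : ∀ s, ∃ u : Fˣ, (u : F) * u = d s := by
    intro s
    rcases Finset.mem_insert.mp (hdS s) with h | h
    · exact ⟨1, by simp [h]⟩
    · exact ⟨Units.mk0 c hc, by simp [Finset.mem_singleton.mp h, sq]⟩
  choose v hv using hroot
  refine ⟨v, ?_⟩
  rw [← hGC, map_coordScaling_span_row]
  apply span_row_inf_dualCode_eq_bot_of_det_ne_zero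
  rwa [transpose_mul, diagonal_transpose, Matrix.mul_assoc, ← Matrix.mul_assoc (diagonal _),
    diagonal_mul_diagonal, ← Matrix.mul_assoc, funext hv]

theorem UE_eq_ULin (F : Type*) [Field F] [Fintype F] [DecidableEq F]
    (hF : 3 < Fintype.card F) : UE F = ULin F := by
  obtain ⟨c, hc, hc2⟩ := exists_ne_zero_sq_ne_one_of_three_lt_card hF
  ext p
  constructor
  · rintro ⟨hp, nn, kk, dd, C, hk, hd, -, hn, hδ, hR⟩
    exact ⟨hp, nn, kk, dd, C, hk, hd, hn, hδ, hR⟩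
  · rintro ⟨hp, nn, kk, dd, C, hk, hd, hn, hδ, hR⟩
    choose v hv using fun i => exists_map_coordScaling_inf_dualCode_eq_bot hc hc2 (C i)
    refine ⟨hp, nn, kk, dd, fun i => (C i).map (coordScaling (v i)).toLinearMap,
      fun i => ?_, fun i => ?_, hv, hn, hδ, hR⟩
    · rw [LinearEquiv.finrank_map_eq, hk]
    · rw [minDist_map_of_hammingNorm_eq _ (hammingNorm_coordScaling (v i)), hd]

theorem alphaE_eq_alphaLin_general
    (q : ℕ) (hq3 : 3 < q)
    (F : Type*) [Field F] [Fintype F] [DecidableEq F] (hcard : Fintype.card F = q)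
    (δ : ℝ) :
    alphaE F δ = alphaLin F δ := by
  rw [alphaE, alphaLin, UE_eq_ULin F (hcard ▸ hq3)]

/-- For a prime power `q > 3`, Euclidean LCD codes over `F_q` achieve the same
asymptotic rate/distance trade-off as arbitrary linear codes:
`α_q^E(δ) = α_q^lin(δ)` for every `δ ∈ [0,1]`. -/
theorem alphaE_eq_alphaLin
    (q : ℕ) (hq : ∃ p m : ℕ, p.Prime ∧ 0 < m ∧ q = p ^ m) (hq3 : 3 < q)
    (F : Type*) [Field F] [Fintype F] [DecidableEq F] (hcard : Fintype.card F = q)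
    (δ : ℝ) (hδ : δ ∈ Set.Icc (0 : ℝ) 1) :
    alphaE F δ = alphaLin F δ :=
  alphaE_eq_alphaLin_general q hq3 F hcard δ
end
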